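/- arXiv:2006.05463 — 2 statements merged into one kernel-verified Lean document; each statement's English description precedes it below -/
import Mathlib

section
/- For an open monitor m in open normal form and a trace s, if m →^s x + m_s for some monitor m_s and variable x, then E_v ⊢ m = m' + s.x for some monitor m' such that m' does not admit any transition m' →^s x + m'' (for any m''). -/
/-- Recursion-free regular monitors (with variables). -/
inductive Mon (Act : Type) : Type
  | end_ : Mon Act
  | yes : Mon Act
  | no : Mon Act
  | act : Act → Mon Act → Mon Act
  | plus : Mon Act → Mon Act → Mon Act
  | var : ℕ → Mon Act

variable {Act : Type}

/-- Verdicts: `end`, `yes`, `no`. -/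
inductive IsVerdict : Mon Act → Prop
  | end_ : IsVerdict Mon.end_
  | yes : IsVerdict Mon.yes
  | no : IsVerdict Mon.no

/-- Labelled transition relation; `none` is the silent action τ. -/
inductive Step : Mon Act → Option Act → Mon Act → Prop
  | act (a : Act) (m : Mon Act) : Step (Mon.act a m) (some a) m
  | plusL {m n m' : Mon Act} {α : Option Act} : Step m α m' → Step (Mon.plus m n) α m'
  | plusR {m n n' : Mon Act} {α : Option Act} : Step n α n' → Step (Mon.plus m n) α n'
  | verdict {v : Mon Act} {α : Option Act} : IsVerdict v → Step v α v

/-- Reflexive-transitive closure of τ-steps. -/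
def TauStar (m n : Mon Act) : Prop :=
  Relation.ReflTransGen (fun p q => Step p none q) m n

/-- Strong transition along a finite trace. -/
inductive Trace : Mon Act → List Act → Mon Act → Prop
  | refl (m : Mon Act) : Trace m [] m
  | cons {m m' m'' : Mon Act} {a : Act} {s : List Act} :
      Step m (some a) m' → Trace m' s m'' → Trace m (a :: s) m''

/-- Weak transition along a finite trace (τ-steps allowed throughout). -/
inductive WTrace : Mon Act → List Act → Mon Act → Prop
  | nil {m m' : Mon Act} : TauStar m m' → WTrace m [] m'
  | cons {m m₁ m₂ m' : Mon Act} {a : Act} {s : List Act} :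
      TauStar m m₁ → Step m₁ (some a) m₂ → WTrace m₂ s m' → WTrace m (a :: s) m'

/-- Acceptance language. -/
def La (m : Mon Act) : Set (List Act) := {s | WTrace m s Mon.yes}

/-- Rejection language. -/
def Lr (m : Mon Act) : Set (List Act) := {s | WTrace m s Mon.no}

/-- Verdict equivalence. -/
def VerdEq (m n : Mon Act) : Prop := La m = La n ∧ Lr m = Lr n

/-- `A · Act^ω`: infinite words having a finite prefix in `A`. -/
def omegaCl (A : Set (List Act)) : Set (ℕ → Act) :=
  {w | ∃ n : ℕ, (List.range n).map w ∈ A}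

/-- ω-verdict equivalence. -/
def OmegaEq (m n : Mon Act) : Prop :=
  omegaCl (La m) = omegaCl (La n) ∧ omegaCl (Lr m) = omegaCl (Lr n)

/-- Closed monitors: no variables. -/
def Closed : Mon Act → Prop
  | Mon.act _ m => Closed m
  | Mon.plus m n => Closed m ∧ Closed n
  | Mon.var _ => False
  | _ => True

/-- `yes` occurs as a subterm. -/
def HasYes : Mon Act → Prop
  | Mon.yes => True
  | Mon.act _ m => HasYes m
  | Mon.plus m n => HasYes m ∨ HasYes n
  | _ => False

/-- `no` occurs as a subterm. -/
def HasNo : Mon Act → Prop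
  | Mon.no => True
  | Mon.act _ m => HasNo m
  | Mon.plus m n => HasNo m ∨ HasNo n
  | _ => False

/-- Syntactic depth. -/
def depth : Mon Act → ℕ
  | Mon.act _ m => depth m + 1
  | Mon.plus m n => max (depth m) (depth n)
  | _ => 0

/-- Applying a substitution. -/
def msubst (σ : ℕ → Mon Act) : Mon Act → Mon Act
  | Mon.var x => σ x
  | Mon.act a m => Mon.act a (msubst σ m)
  | Mon.plus m n => Mon.plus (msubst σ m) (msubst σ n)
  | m => m

/-- Equational derivability from an axiom set `E`. -/
inductive Deriv (E : Mon Act → Mon Act → Prop) : Mon Act → Mon Act → Prop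
  | ax {m n} : E m n → Deriv E m n
  | refl (m) : Deriv E m m
  | symm {m n} : Deriv E m n → Deriv E n m
  | trans {m n p} : Deriv E m n → Deriv E n p → Deriv E m p
  | act (a : Act) {m n} : Deriv E m n → Deriv E (Mon.act a m) (Mon.act a n)
  | plus {m m' n n'} : Deriv E m m' → Deriv E n n' → Deriv E (Mon.plus m n) (Mon.plus m' n')
  | subst (σ : ℕ → Mon Act) {m n} : Deriv E m n → Deriv E (msubst σ m) (msubst σ n)

def vx : Mon Act := Mon.var 0
def vy : Mon Act := Mon.var 1
def vz : Mon Act := Mon.var 2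

/-- The axiom system `E_v`. -/
inductive EvAx : Mon Act → Mon Act → Prop
  | A1 : EvAx (Mon.plus vx vy) (Mon.plus vy vx)
  | A2 : EvAx (Mon.plus vx (Mon.plus vy vz)) (Mon.plus (Mon.plus vx vy) vz)
  | A3 : EvAx (Mon.plus vx vx) vx
  | A4 : EvAx (Mon.plus vx Mon.end_) vx
  | Ea (a : Act) : EvAx (Mon.act a Mon.end_) Mon.end_
  | Ya (a : Act) : EvAx Mon.yes (Mon.plus Mon.yes (Mon.act a Mon.yes))
  | Na (a : Act) : EvAx Mon.no (Mon.plus Mon.no (Mon.act a Mon.no))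
  | Da (a : Act) : EvAx (Mon.act a (Mon.plus vx vy)) (Mon.plus (Mon.act a vx) (Mon.act a vy))

/-- Sum of a list of monitors (`end` for the empty sum). -/
def sumList : List (Mon Act) → Mon Act
  | [] => Mon.end_
  | [m] => m
  | m :: ms => Mon.plus m (sumList ms)

/-- `s.m`: the monitor performing exactly the actions of `s` and then behaving as `m`. -/
def prefixMon (s : List Act) (m : Mon Act) : Mon Act :=
  List.foldr Mon.act m s

/-- Build `Σ_{(a,m)∈l} a.m [+ yes] [+ no]`. -/
def buildNF (l : List (Act × Mon Act)) (hy hn : Bool) : Mon Act :=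
  sumList (l.map (fun p => Mon.act p.1 p.2) ++
    (if hy then [Mon.yes] else []) ++ (if hn then [Mon.no] else []))

/-- Normal forms for closed monitors. -/
inductive NF : Mon Act → Prop
  | mk (l : List (Act × Mon Act)) (hy hn : Bool) :
      (l.map Prod.fst).Nodup →
      (∀ p ∈ l, p.2 ≠ Mon.end_) →
      (∀ p ∈ l, NF p.2) →
      NF (buildNF l hy hn)

/-- Build `Σ_{(a,m)∈l} a.m + Σ_{x∈vs} x [+ yes] [+ no]`. -/
def buildONF (l : List (Act × Mon Act)) (vs : List ℕ) (hy hn : Bool) : Mon Act :=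
  sumList (l.map (fun p => Mon.act p.1 p.2) ++ vs.map Mon.var ++
    (if hy then [Mon.yes] else []) ++ (if hn then [Mon.no] else []))

/-- Open normal forms. -/
inductive ONF : Mon Act → Prop
  | mk (l : List (Act × Mon Act)) (vs : List ℕ) (hy hn : Bool) :
      (l.map Prod.fst).Nodup → vs.Nodup →
      (∀ p ∈ l, p.2 ≠ Mon.end_) →
      (∀ p ∈ l, ONF p.2) →
      ONF (buildONF l vs hy hn)

/-- `s^i`: the `i`-fold concatenation of `s`. -/
def spow (s : List Act) (i : ℕ) : List Act := (List.replicate i s).flatten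

/-- All traces of length exactly `n` over the alphabet listed by `L`. -/
def tuples (L : List Act) : ℕ → List (List Act)
  | 0 => [[]]
  | n + 1 => (tuples L n).flatMap (fun t => L.map (fun a => a :: t))

/-- All traces of length at most `n`. -/
def allUpTo (L : List Act) (n : ℕ) : List (List Act) :=
  (List.range (n + 1)).flatMap (tuples L)

/-- `s̄^≤(m)`: sum of `s'.m` over traces `s'` with `|s'| ≤ |s|` that are not prefixes of `s`. -/
def sbarLe [DecidableEq Act] (L : List Act) (s : List Act) (m : Mon Act) : Mon Act :=
  sumList (((allUpTo L s.length).filter (fun t => !(t.isPrefixOf s))).map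
    (fun t => prefixMon t m))

/-- `s̄(m) = s̄^≤(m) + s.Σ_{a∈Act} a.m`. -/
def sbar [DecidableEq Act] (L : List Act) (s : List Act) (m : Mon Act) : Mon Act :=
  Mon.plus (sbarLe L s m) (prefixMon s (sumList (L.map fun a => Mon.act a m)))

/-- `s̄^(k)(m)`. -/
def sbarK [DecidableEq Act] (L : List Act) (s : List Act) (m : Mon Act) : ℕ → Mon Act
  | 0 => sbar L s m
  | 1 => sbar L s m
  | k + 2 =>
      Mon.plus
        (sumList ((List.range k).map (fun i => prefixMon (spow s (i + 1)) (sbarLe L s m))))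
        (prefixMon (spow s (k + 1)) (sbar L s m))


/-!
By induction on `s`. If `s` is empty, the hypothesis says that the normal form is literally
`x + m_s`: it has no action summands, its first variable is `x`, and `m_s` is the rest of the
sum, in which `x` no longer occurs because the variables of a normal form are distinct. If
`s = a :: s'`, the `a`-transition must go through the unique summand `a.n`; the induction
hypothesis splits `n = n' + s'.x`, distributivity `D_a` gives `a.n = a.n' + a.s'.x`, and
replacing `a.n` by `a.n'` yields `m'`, whose only `a`-summand is `a.n'`.
-/

instance : Trans (Deriv (Act := Act) EvAx) (Deriv EvAx) (Deriv EvAx) := ⟨Deriv.trans⟩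

infix:50 " ≡ₑ " => Deriv EvAx

namespace Deriv

theorem plus_comm (m n : Mon Act) : Mon.plus m n ≡ₑ Mon.plus n m := by
  simpa [msubst, vx, vy] using
    Deriv.subst (E := EvAx) (fun i => if i = 0 then m else n) (Deriv.ax EvAx.A1)

theorem plus_assoc (m n p : Mon Act) :
    Mon.plus m (Mon.plus n p) ≡ₑ Mon.plus (Mon.plus m n) p := by
  simpa [msubst, vx, vy, vz] using
    Deriv.subst (E := EvAx) (fun i => if i = 0 then m else if i = 1 then n else p)
      (Deriv.ax EvAx.A2)

theorem plus_end (m : Mon Act) : Mon.plus m Mon.end_ ≡ₑ m := by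
  simpa [msubst, vx] using Deriv.subst (E := EvAx) (fun _ => m) (Deriv.ax EvAx.A4)

theorem act_plus (a : Act) (m n : Mon Act) :
    Mon.act a (Mon.plus m n) ≡ₑ Mon.plus (Mon.act a m) (Mon.act a n) := by
  simpa [msubst, vx, vy] using
    Deriv.subst (E := EvAx) (fun i => if i = 0 then m else n) (Deriv.ax (EvAx.Da a))

theorem plus_right_comm (m n p : Mon Act) :
    Mon.plus (Mon.plus m n) p ≡ₑ Mon.plus (Mon.plus m p) n :=
  calc _ ≡ₑ (Mon.plus m (Mon.plus n p)) := (plus_assoc m n p).symm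
    _ ≡ₑ (Mon.plus m (Mon.plus p n)) := .plus (.refl m) (plus_comm n p)
    _ ≡ₑ _ := plus_assoc m p n

theorem sumList_cons (m : Mon Act) (L : List (Mon Act)) :
    sumList (m :: L) ≡ₑ Mon.plus m (sumList L) := by
  cases L with
  | nil => exact (plus_end m).symm
  | cons _ _ => exact .refl _

theorem sumList_append (A B : List (Mon Act)) :
    sumList (A ++ B) ≡ₑ Mon.plus (sumList A) (sumList B) := by
  induction A with
  | nil => exact ((plus_comm _ _).trans (plus_end _)).symm
  | cons m A ih =>
    calc _ ≡ₑ (Mon.plus m (sumList (A ++ B))) := sumList_cons m (A ++ B)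
      _ ≡ₑ (Mon.plus m (Mon.plus (sumList A) (sumList B))) := .plus (.refl m) ih
      _ ≡ₑ (Mon.plus (Mon.plus m (sumList A)) (sumList B)) := plus_assoc _ _ _
      _ ≡ₑ _ := .plus (sumList_cons m A).symm (.refl _)

theorem sumList_split_summand {A B : List (Mon Act)} {e e' r : Mon Act}
    (h : e ≡ₑ Mon.plus e' r) : sumList (A ++ e :: B) ≡ₑ Mon.plus (sumList (A ++ e' :: B)) r :=
  calc _ ≡ₑ (Mon.plus (sumList A) (Mon.plus e (sumList B))) :=
        (sumList_append A _).trans (.plus (.refl _) (sumList_cons e B))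
    _ ≡ₑ (Mon.plus (sumList A) (Mon.plus (Mon.plus e' (sumList B)) r)) :=
        .plus (.refl _) ((Deriv.plus h (.refl _)).trans (plus_right_comm _ _ _))
    _ ≡ₑ (Mon.plus (Mon.plus (sumList A) (Mon.plus e' (sumList B))) r) := plus_assoc _ _ _
    _ ≡ₑ _ :=
        .plus ((sumList_append A _).trans (.plus (.refl _) (sumList_cons e' B))).symm (.refl r)

end Deriv

theorem Step.eq_of_isVerdict {v n : Mon Act} {α : Option Act} (hv : IsVerdict v)
    (h : Step v α n) : n = v := by
  cases hv <;> cases h <;> rfl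

theorem Trace.eq_of_nil {m n : Mon Act} (h : Trace m [] n) : m = n := by
  cases h; rfl

theorem Trace.eq_of_isVerdict {v n : Mon Act} {s : List Act} (h : Trace v s n)
    (hv : IsVerdict v) : n = v := by
  induction h with
  | refl => rfl
  | cons hstep _ ih =>
    obtain rfl := hstep.eq_of_isVerdict hv
    exact ih hv

theorem Trace.not_var_cons {y : ℕ} {a : Act} {s : List Act} {n : Mon Act} :
    ¬ Trace (Mon.var y) (a :: s) n := by
  rintro (_ | ⟨hstep, _⟩)
  cases hstep with
  | verdict hv => cases hv

theorem Trace.of_act_cons {a b : Act} {q n : Mon Act} {s : List Act}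
    (h : Trace (Mon.act b q) (a :: s) n) : b = a ∧ Trace q s n := by
  rcases h with _ | ⟨hstep, htr⟩
  cases hstep with
  | act => exact ⟨rfl, htr⟩
  | verdict hv => cases hv

theorem Trace.of_plus_cons {m₁ m₂ n : Mon Act} {a : Act} {s : List Act}
    (h : Trace (Mon.plus m₁ m₂) (a :: s) n) :
    Trace m₁ (a :: s) n ∨ Trace m₂ (a :: s) n := by
  rcases h with _ | ⟨hstep, htr⟩
  cases hstep with
  | plusL h₁ => exact .inl (.cons h₁ htr)
  | plusR h₂ => exact .inr (.cons h₂ htr)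
  | verdict hv => cases hv

theorem Trace.of_sumList_cons {L : List (Mon Act)} {a : Act} {s : List Act} {n : Mon Act}
    (h : Trace (sumList L) (a :: s) n) : (∃ e ∈ L, Trace e (a :: s) n) ∨ n = Mon.end_ := by
  induction L with
  | nil => exact .inr (h.eq_of_isVerdict .end_)
  | cons e L ih =>
    cases L with
    | nil => exact .inl ⟨e, List.mem_singleton_self e, h⟩
    | cons e' L =>
      rcases h.of_plus_cons with h | h
      · exact .inl ⟨e, List.mem_cons_self, h⟩
      · rcases ih h with ⟨e'', he'', h⟩ | rfl
        · exact .inl ⟨e'', List.mem_cons_of_mem e he'', h⟩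
        · exact .inr rfl

theorem sumList_cons_eq_plus {e p q : Mon Act} {L : List (Mon Act)}
    (he : ∀ u v, e ≠ Mon.plus u v) (h : sumList (e :: L) = Mon.plus p q) :
    e = p ∧ q = sumList L := by
  match L, h with
  | [], h => exact absurd h (he p q)
  | _ :: _, h => exact ⟨(Mon.plus.inj h).1, (Mon.plus.inj h).2.symm⟩

theorem buildONF_eq_plus_var {l : List (Act × Mon Act)} {vs : List ℕ} {hy hn : Bool}
    {x : ℕ} {q : Mon Act} (h : buildONF l vs hy hn = Mon.plus (Mon.var x) q) :
    l = [] ∧ ∃ vs', vs = x :: vs' ∧ q = buildONF [] vs' hy hn := by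
  match l, vs with
  | [], [] => cases hy <;> cases hn <;> simp [buildONF, sumList] at h
  | [], y :: vs' =>
    obtain ⟨hyx, rfl⟩ := sumList_cons_eq_plus (by simp) h
    cases hyx
    exact ⟨rfl, vs', rfl, by simp [buildONF]⟩
  | (b, n) :: l, _ => exact absurd (sumList_cons_eq_plus (by simp) h).1 (by simp)

/-- Verdict summands can only reach themselves and variables are stuck, so the trace must enter
an action summand. -/
theorem exists_of_trace_buildONF {l : List (Act × Mon Act)} {vs : List ℕ} {hy hn : Bool}
    {a : Act} {s : List Act} {p q : Mon Act}
    (h : Trace (buildONF l vs hy hn) (a :: s) (Mon.plus p q)) :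
    ∃ n, (a, n) ∈ l ∧ Trace n s (Mon.plus p q) := by
  rcases h.of_sumList_cons with ⟨e, he, htr⟩ | hend
  · simp only [List.mem_append, List.mem_map] at he
    rcases he with ((⟨⟨b, n⟩, hbn, rfl⟩ | ⟨y, -, rfl⟩) | hyes) | hno
    · obtain ⟨rfl, htr'⟩ := (show Trace (Mon.act b n) (a :: s) _ from htr).of_act_cons
      exact ⟨n, hbn, htr'⟩
    · exact absurd htr Trace.not_var_cons
    · cases hy <;> simp only [Bool.false_eq_true, ↓reduceIte, List.not_mem_nil,
        List.mem_singleton] at hyes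
      exact absurd (htr.eq_of_isVerdict (hyes ▸ .yes)) (by simp [hyes])
    · cases hn <;> simp only [Bool.false_eq_true, ↓reduceIte, List.not_mem_nil,
        List.mem_singleton] at hno
      exact absurd (htr.eq_of_isVerdict (hno ▸ .no)) (by simp [hno])
  · exact absurd hend (by simp)

theorem buildONF_split_action {l₁ l₂ : List (Act × Mon Act)} {vs : List ℕ} {hy hn : Bool}
    {a : Act} {n n' r : Mon Act} (h : n ≡ₑ Mon.plus n' r) :
    buildONF (l₁ ++ (a, n) :: l₂) vs hy hn ≡ₑ
      Mon.plus (buildONF (l₁ ++ (a, n') :: l₂) vs hy hn) (Mon.act a r) := by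
  simp only [buildONF, List.map_append, List.map_cons, List.append_assoc, List.cons_append]
  exact Deriv.sumList_split_summand ((Deriv.act a h).trans (Deriv.act_plus a n' r))

theorem eq_of_mem_of_nodup_keys {l : List (Act × Mon Act)} (hl : (l.map Prod.fst).Nodup)
    {a : Act} {n n' : Mon Act} (hn : (a, n) ∈ l) (hn' : (a, n') ∈ l) : n = n' :=
  congrArg Prod.snd (List.inj_on_of_nodup_map hl hn hn' rfl)

/-- separation of a variable occurrence in an open normal form. -/
theorem stmt16 (m : Mon Act) (hnf : ONF m) (s : List Act) (x : ℕ) (m_s : Mon Act)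
    (h : Trace m s (Mon.plus (Mon.var x) m_s)) :
    ∃ m' : Mon Act,
      Deriv EvAx m (Mon.plus m' (prefixMon s (Mon.var x))) ∧
      ∀ m'' : Mon Act, ¬ Trace m' s (Mon.plus (Mon.var x) m'') := by
  induction s generalizing m with
  | nil =>
    obtain ⟨l, vs, hy, hn, -, hvs, -, -⟩ := hnf
    have hm := h.eq_of_nil
    obtain ⟨rfl, vs', rfl, rfl⟩ := buildONF_eq_plus_var hm
    refine ⟨buildONF [] vs' hy hn, hm ▸ Deriv.plus_comm _ _, fun m'' h'' => ?_⟩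
    obtain ⟨-, vs'', rfl, -⟩ := buildONF_eq_plus_var h''.eq_of_nil
    exact (List.nodup_cons.mp hvs).1 List.mem_cons_self
  | cons a s ih =>
    obtain ⟨l, vs, hy, hn, hkeys, -, -, honf⟩ := hnf
    obtain ⟨n, hn_mem, htr⟩ := exists_of_trace_buildONF h
    obtain ⟨n', hsplit, hn'⟩ := ih n (honf _ hn_mem) htr
    obtain ⟨l₁, l₂, rfl⟩ := List.append_of_mem hn_mem
    refine ⟨buildONF (l₁ ++ (a, n') :: l₂) vs hy hn, buildONF_split_action hsplit,
      fun m'' h'' => ?_⟩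
    obtain ⟨k, hk, htr'⟩ := exists_of_trace_buildONF h''
    have hkeys' : ((l₁ ++ (a, n') :: l₂).map Prod.fst).Nodup := by simpa using hkeys
    obtain rfl := eq_of_mem_of_nodup_keys hkeys' hk (List.mem_append_right l₁ List.mem_cons_self)
    exact hn' m'' htr'
end

section
/- When Act = {a} is a singleton, the equation V1: x = x + a.x is sound for verdict equivalence, and moreover for every n ≥ 0 the equation x = x + a^n.x is derivable from E_v' ∪ {V1}, where a^n.x denotes x prefixed by n copies of a. -/
variable {Act : Type}

/-- `E_v' ∪ {V1}` over the singleton alphabet: `E_v` plus `O1 : yes+no = yes+no+x`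
and `V1 : x = x + a.x`. -/
def Ev1 : Mon Unit → Mon Unit → Prop := fun m n =>
  EvAx m n ∨
  (m = Mon.plus Mon.yes Mon.no ∧ n = Mon.plus (Mon.plus Mon.yes Mon.no) vx) ∨
  (m = vx ∧ n = Mon.plus vx (Mon.act () vx))

/- Over a one-letter alphabet a verdict, once reached, absorbs every further `a`, so any
verdict trace `a :: s` of `a.p` is matched by the trace `s ++ [a] = a :: s` of `p`; hence
`p + a.p` and `p` reach the same verdicts on the same traces. For the derivations, `V1` at
`aⁿ.x` gives `aⁿ.x = aⁿ.x + aⁿ⁺¹.x`, and absorption `m = m + n` is transitive by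
associativity, so induction on `n` starts from idempotence `x = x + x`. -/

section Semantics

variable {m n p v : Mon Act} {s t : List Act}

lemma IsVerdict.wtrace_self (hv : IsVerdict v) : ∀ s : List Act, WTrace v s v
  | [] => .nil .refl
  | _ :: s => .cons .refl (.verdict hv) (hv.wtrace_self s)

lemma WTrace.append (h₁ : WTrace m s n) (h₂ : WTrace n t p) : WTrace m (s ++ t) p := by
  induction h₁ with
  | nil ts =>
    cases h₂ with
    | nil ts' => exact .nil (ts.trans ts')
    | cons ts' st w => exact .cons (ts.trans ts') st w
  | cons ts st _ ih => exact .cons ts st (ih h₂)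

lemma WTrace.of_steps_subset (hstep : ∀ α q, Step m α q → Step n α q) (hv : IsVerdict v)
    (h : WTrace m s v) : WTrace n s v := by
  cases h with
  | nil ts =>
    rcases ts.cases_head with rfl | ⟨q, hq, ts'⟩
    · exact .nil (.single (hstep _ _ (.verdict hv)))
    · exact .nil (ts'.head (hstep _ _ hq))
  | cons ts st w =>
    rcases ts.cases_head with rfl | ⟨q, hq, ts'⟩
    · exact .cons .refl (hstep _ _ st) w
    · exact .cons (ts'.head (hstep _ _ hq)) st w

lemma WTrace.tau_head (hq : Step m none n) (h : WTrace n s v) : WTrace m s v := by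
  cases h with
  | nil ts => exact .nil (ts.head hq)
  | cons ts st w => exact .cons (ts.head hq) st w

lemma WTrace.cases_head (h : WTrace m s v) (hm : m ≠ v) :
    (∃ q, Step m none q ∧ WTrace q s v) ∨
      ∃ a s' q, s = a :: s' ∧ Step m (some a) q ∧ WTrace q s' v := by
  cases h with
  | nil ts =>
    rcases ts.cases_head with rfl | ⟨q, hq, ts'⟩
    · exact absurd rfl hm
    · exact .inl ⟨q, hq, .nil ts'⟩
  | cons ts st w =>
    rcases ts.cases_head with rfl | ⟨q, hq, ts'⟩
    · exact .inr ⟨_, _, _, rfl, st, w⟩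
    · exact .inl ⟨q, hq, .cons ts' st w⟩

lemma wtrace_plus_iff (hv : IsVerdict v) :
    WTrace (Mon.plus m n) s v ↔ WTrace m s v ∨ WTrace n s v := by
  refine ⟨fun h => ?_, fun h => h.elim
    (.of_steps_subset (fun _ _ => .plusL) hv) (.of_steps_subset (fun _ _ => .plusR) hv)⟩
  have hne : Mon.plus m n ≠ v := by rintro rfl; cases hv
  rcases h.cases_head hne with ⟨q, hq, w⟩ | ⟨a, s', q, rfl, hq, w⟩
  · cases hq with
    | plusL hq => exact .inl (w.tau_head hq)
    | plusR hq => exact .inr (w.tau_head hq)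
    | verdict h => cases h
  · cases hq with
    | plusL hq => exact .inl (.cons .refl hq w)
    | plusR hq => exact .inr (.cons .refl hq w)
    | verdict h => cases h

lemma wtrace_act_iff {a : Act} (hv : IsVerdict v) :
    WTrace (Mon.act a p) s v ↔ ∃ s', s = a :: s' ∧ WTrace p s' v := by
  refine ⟨fun h => ?_, fun ⟨s', hs, w⟩ => hs ▸ .cons .refl (.act a p) w⟩
  have hne : Mon.act a p ≠ v := by rintro rfl; cases hv
  rcases h.cases_head hne with ⟨q, hq, _⟩ | ⟨b, s', q, rfl, hq, w⟩
  · cases hq with | verdict h => cases h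
  · cases hq with
    | act => exact ⟨s', rfl, w⟩
    | verdict h => cases h

end Semantics

lemma List.unit_append_singleton (s : List Unit) : s ++ [()] = () :: s := by
  induction s <;> simp_all

lemma wtrace_plus_act_unit_iff {p v : Mon Unit} {s : List Unit} (hv : IsVerdict v) :
    WTrace (Mon.plus p (Mon.act () p)) s v ↔ WTrace p s v := by
  rw [wtrace_plus_iff hv, wtrace_act_iff hv, or_iff_left_of_imp]
  rintro ⟨s', rfl, w⟩
  rw [← List.unit_append_singleton]
  exact w.append (hv.wtrace_self [()])

theorem verdEq_plus_act_unit (p : Mon Unit) : VerdEq p (Mon.plus p (Mon.act () p)) :=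
  ⟨Set.ext fun _ => (wtrace_plus_act_unit_iff .yes).symm,
    Set.ext fun _ => (wtrace_plus_act_unit_iff .no).symm⟩

section Derivations

variable {E : Mon Act → Mon Act → Prop}

lemma Deriv.plus_self (hE : ∀ m n, EvAx m n → E m n) (m : Mon Act) :
    Deriv E (Mon.plus m m) m :=
  Deriv.subst (fun _ => m) (.ax (hE _ _ .A3))

lemma Deriv.plus_assoc_s18 (hE : ∀ m n, EvAx m n → E m n) (m n p : Mon Act) :
    Deriv E (Mon.plus m (Mon.plus n p)) (Mon.plus (Mon.plus m n) p) :=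
  Deriv.subst (fun | 0 => m | 1 => n | _ => p) (.ax (hE _ _ .A2))

lemma Deriv.absorb_trans (hE : ∀ m n, EvAx m n → E m n) {m n p : Mon Act}
    (hmn : Deriv E m (Mon.plus m n)) (hnp : Deriv E n (Mon.plus n p)) :
    Deriv E m (Mon.plus m p) :=
  (hmn.trans (.plus (.refl m) hnp)).trans <|
    (Deriv.plus_assoc_s18 hE m n p).trans (.plus hmn.symm (.refl p))

end Derivations

lemma Deriv.ev1_self_plus_act (m : Mon Unit) : Deriv Ev1 m (Mon.plus m (Mon.act () m)) :=
  Deriv.subst (fun _ => m) (.ax (E := Ev1) (Or.inr (Or.inr ⟨rfl, rfl⟩)))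

/-- over `Act = {a}`, `V1 : x = x + a.x` is sound for verdict
equivalence, and `x = x + a^n.x` is derivable from `E_v' ∪ {V1}` for every `n`. -/
theorem stmt18 :
    (∀ σ : ℕ → Mon Unit, (∀ v, Closed (σ v)) →
        VerdEq (msubst σ vx) (msubst σ (Mon.plus vx (Mon.act () vx)))) ∧
    (∀ n : ℕ, Deriv Ev1 vx (Mon.plus vx (prefixMon (List.replicate n ()) vx))) := by
  refine ⟨fun σ _ => verdEq_plus_act_unit (σ 0), fun n => ?_⟩
  induction n with
  | zero => exact (Deriv.plus_self (fun _ _ => .inl) vx).symm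
  | succ n ih => exact Deriv.absorb_trans (fun _ _ => .inl) ih (.ev1_self_plus_act _)
end
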